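/- Let E_1 ∈ ℱ_1, let E_2 ⊆ [0,1]×Ω be measurable and non-anticipative, let P ∈ 𝒬^E and let τ ∈ 𝒯^P. Let μ be the pushforward of P under the map ω ↦ (τ(ω), ω) from Ω to Ω̄. Then μ ∈ 𝒬̄^E, and for every measurable non-anticipative Z : [0,1]×Ω → ℝ that is bounded from below, ∫_{Ω̄} Z(θ,ω) μ(dθ,dω) = E^P[Z(τ(ω),ω)]. -/

import Mathlib

open MeasureTheory Set Filter Topology
open scoped ENNReal

noncomputable section

/-- `ℝ^d`. -/
abbrev Eucl (d : ℕ) : Type := EuclideanSpace ℝ (Fin d)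

/-- A function indexed by a linearly ordered topological space is càdlàg if it is
right-continuous at every point and has left limits at every point. -/
def Cadlag {α : Type*} [TopologicalSpace α] [LinearOrder α] {β : Type*} [TopologicalSpace β]
    (f : α → β) : Prop :=
  (∀ t : α, Tendsto f (𝓝[>] t) (𝓝 (f t))) ∧ (∀ t : α, ∃ L : β, Tendsto f (𝓝[<] t) (𝓝 L))

/-- The canonical path space `Ω`: càdlàg paths `ω : [0,1] → ℝ^d`. -/
def PathSpace (d : ℕ) : Type := {ω : unitInterval → Eucl d // Cadlag ω}

/-- The canonical filtration `ℱ_t := σ(X_s : s ≤ t)` on the path space. -/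
def pathF (d : ℕ) (t : unitInterval) : MeasurableSpace (PathSpace d) :=
  ⨆ s : unitInterval, ⨆ _ : s ≤ t, MeasurableSpace.comap (fun ω : PathSpace d => ω.1 s) inferInstance

/-- The σ-algebra `ℱ_1` on `Ω`. -/
instance instMSPathSpace (d : ℕ) : MeasurableSpace (PathSpace d) := pathF d 1

/-- Lebesgue measure `λ` on `[0,1]`. -/
def lebI : Measure unitInterval := (volume : Measure ℝ).comap Subtype.val

/-- `X` is a square-integrable martingale under `P` (w.r.t. the canonical filtration):
`E^P‖X_t‖² < ∞` for all `t` and `E^P[X_t | ℱ_s] = X_s` `P`-a.s. for all `s ≤ t`. -/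
def IsSqIntMart (d : ℕ) (P : Measure (PathSpace d)) : Prop :=
  (∀ t : unitInterval, Integrable (fun ω : PathSpace d => ‖ω.1 t‖ ^ 2) P) ∧
  (∀ s t : unitInterval, s ≤ t →
    (fun ω : PathSpace d => ω.1 s) =ᵐ[P] P[fun ω : PathSpace d => ω.1 t | pathF d s])

/-- `𝒬`: probability measures on `(Ω, ℱ_1)` under which `X` is a square-integrable martingale. -/
def QSet (d : ℕ) : Set (Measure (PathSpace d)) :=
  {P | IsProbabilityMeasure P ∧ IsSqIntMart d P}

lemma cadlag_stop {d : ℕ} (ω : PathSpace d) (t : unitInterval) :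
    Cadlag (fun s => ω.1 (min s t)) := by
  constructor
  · intro s
    rcases le_or_gt t s with h | h
    · have hev : ∀ᶠ s' in 𝓝[>] s, ω.1 (min s' t) = ω.1 (min s t) := by
        filter_upwards [self_mem_nhdsWithin] with s' hs'
        have h1 : min s' t = t := min_eq_right (le_of_lt (lt_of_le_of_lt h hs'))
        have h2 : min s t = t := min_eq_right h
        rw [h1, h2]
      exact Tendsto.congr' (by filter_upwards [hev] with a ha using ha.symm) tendsto_const_nhds
    · have hmem : Iio t ∈ 𝓝[>] s := nhdsWithin_le_nhds (Iio_mem_nhds h)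
      have hev : ∀ᶠ s' in 𝓝[>] s, ω.1 s' = ω.1 (min s' t) := by
        filter_upwards [hmem] with s' hs'
        rw [min_eq_left (le_of_lt hs')]
      have hmin : min s t = s := min_eq_left h.le
      refine Tendsto.congr' hev ?_
      show Tendsto (fun s' => ω.1 s') (𝓝[>] s) (𝓝 (ω.1 (min s t)))
      rw [hmin]
      exact ω.2.1 s
  · intro s
    rcases le_or_gt s t with h | h
    · obtain ⟨L, hL⟩ := ω.2.2 s
      refine ⟨L, ?_⟩
      have hev : ∀ᶠ s' in 𝓝[<] s, ω.1 s' = ω.1 (min s' t) := by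
        filter_upwards [self_mem_nhdsWithin] with s' hs'
        rw [min_eq_left (le_of_lt (lt_of_lt_of_le hs' h))]
      exact Tendsto.congr' hev hL
    · refine ⟨ω.1 t, ?_⟩
      have hmem : Ioi t ∈ 𝓝[<] s := nhdsWithin_le_nhds (Ioi_mem_nhds h)
      have hev : ∀ᶠ s' in 𝓝[<] s, ω.1 (min s' t) = ω.1 t := by
        filter_upwards [hmem] with s' hs'
        rw [min_eq_right (le_of_lt hs')]
      exact Tendsto.congr' (by filter_upwards [hev] with a ha using ha.symm) tendsto_const_nhds

/-- The stopped path `ω_{·∧t}`. -/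
def stopPath {d : ℕ} (ω : PathSpace d) (t : unitInterval) : PathSpace d :=
  ⟨fun s => ω.1 (min s t), cadlag_stop ω t⟩

/-- A set `E₂ ⊆ [0,1] × Ω` is non-anticipative if `(t,ω) ∈ E₂ ⇔ (t, ω_{·∧t}) ∈ E₂`. -/
def NonAnticipativeSet {d : ℕ} (E₂ : Set (unitInterval × PathSpace d)) : Prop :=
  ∀ p : unitInterval × PathSpace d, p ∈ E₂ ↔ (p.1, stopPath p.2 p.1) ∈ E₂

/-- A function `Z` on `[0,1] × Ω` is non-anticipative if `Z(t,ω) = Z(t, ω_{·∧t})`. -/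
def NonAnticipativeFun {d : ℕ} (Z : unitInterval × PathSpace d → ℝ) : Prop :=
  ∀ p : unitInterval × PathSpace d, Z p = Z (p.1, stopPath p.2 p.1)

/-- The enlarged space `Ω̄ := [0,1] × Ω`. -/
abbrev OmegaBar (d : ℕ) : Type := unitInterval × PathSpace d

/-- The enlarged filtration `ℱ̄_t := σ((θ,ω) ↦ θ∧t) ∨ σ((θ,ω) ↦ ω(s) : s ≤ t)`. -/
def barF (d : ℕ) (t : unitInterval) : MeasurableSpace (OmegaBar d) :=
  MeasurableSpace.comap (fun p : OmegaBar d => min p.1 t) inferInstance ⊔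
  ⨆ s : unitInterval, ⨆ _ : s ≤ t,
    MeasurableSpace.comap (fun p : OmegaBar d => p.2.1 s) inferInstance

/-- `(θ,ω) ↦ X_t(ω)` is a square-integrable martingale w.r.t. `(ℱ̄_t)` under `μ`. -/
def IsSqIntMartBar (d : ℕ) (μ : Measure (OmegaBar d)) : Prop :=
  (∀ t : unitInterval, Integrable (fun p : OmegaBar d => ‖p.2.1 t‖ ^ 2) μ) ∧
  (∀ s t : unitInterval, s ≤ t →
    (fun p : OmegaBar d => p.2.1 s) =ᵐ[μ] μ[fun p : OmegaBar d => p.2.1 t | barF d s])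

/-- `𝒬̄`: probability measures on `Ω̄` under which `X` is a square-integrable `ℱ̄`-martingale. -/
def QBar (d : ℕ) : Set (Measure (OmegaBar d)) :=
  {μ | IsProbabilityMeasure μ ∧ IsSqIntMartBar d μ}

/-- `𝒬^E`. -/
def QE (d : ℕ) (E₁ : Set (PathSpace d)) (E₂ : Set (unitInterval × PathSpace d)) :
    Set (Measure (PathSpace d)) :=
  {P | P ∈ QSet d ∧ P E₁ = 1 ∧ (lebI.prod P) E₂ = 1}

/-- `𝒬̄^E`. -/
def QEBar (d : ℕ) (E₁ : Set (PathSpace d)) (E₂ : Set (unitInterval × PathSpace d)) :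
    Set (Measure (OmegaBar d)) :=
  {μ | μ ∈ QBar d ∧ μ (univ ×ˢ E₁) = 1 ∧
    (lebI.prod μ) {q : unitInterval × OmegaBar d | (q.1, q.2.2) ∈ E₂} = 1}

/-- The augmented filtration `ℱ^P_t := ℱ_t ∨ σ(P-null sets of ℱ_1)`. -/
def augF (d : ℕ) (P : Measure (PathSpace d)) (t : unitInterval) :
    MeasurableSpace (PathSpace d) :=
  pathF d t ⊔ MeasurableSpace.generateFrom {N : Set (PathSpace d) | P N = 0}

/-- `τ` is a `[0,1]`-valued `𝔽^P`-stopping time. -/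
def IsStopTime (d : ℕ) (P : Measure (PathSpace d)) (τ : PathSpace d → unitInterval) : Prop :=
  ∀ t : unitInterval, MeasurableSet[augF d P t] {ω : PathSpace d | τ ω ≤ t}

/-- `Z : [0,1] × Ω → ℝ` is `𝔽`-progressively measurable: for each `t ∈ [0,1]` the restriction
of `Z` to `[0,t] × Ω` is `Borel([0,t]) ⊗ ℱ_t`-measurable. -/
def ProgMeas {d : ℕ} (Z : unitInterval × PathSpace d → ℝ) : Prop :=
  ∀ t : unitInterval,
    @Measurable ({s : unitInterval // s ≤ t} × PathSpace d) ℝ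
      (@Prod.instMeasurableSpace _ _ inferInstance (pathF d t)) _
      (fun q => Z (q.1.1, q.2))

/-- `ψ : [0,1] × Ω → ℝ` is `𝔽^P`-progressively measurable. -/
def ProgMeasAug {d : ℕ} (P : Measure (PathSpace d)) (ψ : unitInterval × PathSpace d → ℝ) : Prop :=
  ∀ t : unitInterval,
    @Measurable ({s : unitInterval // s ≤ t} × PathSpace d) ℝ
      (@Prod.instMeasurableSpace _ _ inferInstance (augF d P t)) _
      (fun q => ψ (q.1.1, q.2))

/-- The integral of `f` against `P` with values in `EReal` (allowed to be `±∞`). -/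
def intE {α : Type*} [MeasurableSpace α] (P : Measure α) (f : α → ℝ) : EReal :=
  ((∫⁻ a, ENNReal.ofReal (f a) ∂P : ℝ≥0∞) : EReal) -
    ((∫⁻ a, ENNReal.ofReal (-(f a)) ∂P : ℝ≥0∞) : EReal)

/-- `μ` is `ε`-modified: `μ({1}×Γ) ≥ ε·μ^Ω(Γ)` for all `Γ ∈ ℱ_1`. -/
def EpsModified {d : ℕ} (ε : ℝ) (μ : Measure (OmegaBar d)) : Prop :=
  ∀ Γ : Set (PathSpace d), MeasurableSet[pathF d 1] Γ →
    ENNReal.ofReal ε * (μ.map Prod.snd) Γ ≤ μ ({(1 : unitInterval)} ×ˢ Γ)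

/-!
Under the graph map `ω ↦ (τ ω, ω)` the path coordinate is the identity, so the law of `X`, the
sets `E₁`, `E₂` and the integrals of `Z` transfer verbatim. The only real work is the martingale
property for the larger filtration `ℱ̄_s`, which also sees `τ ∧ s`: as `τ` is an `𝔽^P`-stopping
time, `τ ∧ s` is `ℱ_s`-measurable up to `P`-null sets, so every `ℱ̄_s`-event pulls back to an
`ℱ_s`-event modulo a null set, and there the `ℱ`-martingale property of `X` under `P` applies.
-/

section AeClosure

variable {α β : Type*} {m mα : MeasurableSpace α} {m' mβ : MeasurableSpace β}

/-- `m` augmented by the `μ`-null sets. -/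
def aeClosure (μ : Measure α) (m : MeasurableSpace α) : MeasurableSpace α where
  MeasurableSet' B := ∃ A, MeasurableSet[m] A ∧ B =ᵐ[μ] A
  measurableSet_empty := ⟨∅, @MeasurableSet.empty _ m, EventuallyEq.rfl⟩
  measurableSet_compl := by
    rintro B ⟨A, hA, hBA⟩
    exact ⟨Aᶜ, hA.compl, hBA.compl⟩
  measurableSet_iUnion B hB := by
    choose A hA hBA using hB
    exact ⟨⋃ i, A i, MeasurableSet.iUnion hA, Filter.EventuallyEq.countable_iUnion hBA⟩

variable {μ : Measure α}

lemma le_aeClosure (μ : Measure α) (m : MeasurableSpace α) : m ≤ aeClosure μ m :=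
  fun A hA => ⟨A, hA, EventuallyEq.rfl⟩

lemma measurableSet_aeClosure_of_measure_eq_zero {N : Set α} (hN : μ N = 0) :
    MeasurableSet[aeClosure μ m] N :=
  ⟨∅, @MeasurableSet.empty _ m, ae_eq_empty.mpr hN⟩

lemma nullMeasurableSet_of_measurableSet_aeClosure (hm : m ≤ mα) {B : Set α}
    (hB : MeasurableSet[aeClosure μ m] B) : NullMeasurableSet B μ := by
  obtain ⟨A, hA, hBA⟩ := hB
  exact (hm A hA).nullMeasurableSet.congr hBA.symm

theorem ae_eq_condExp_map {E : Type*} [NormedAddCommGroup E] [NormedSpace ℝ E] [CompleteSpace E]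
    {P : Measure α} [IsFiniteMeasure P] {g : α → β} (hg : AEMeasurable g P)
    (hm : m ≤ mα) (hm' : m' ≤ mβ) (hgm : Measurable[aeClosure P m, m'] g)
    {X Y : β → E} (hX : StronglyMeasurable X) (hY : StronglyMeasurable[m'] Y)
    (hXg : Integrable (X ∘ g) P) (hYX : Y ∘ g =ᵐ[P] P[X ∘ g | m]) :
    Y =ᵐ[P.map g] (P.map g)[X | m'] := by
  have hYm : AEStronglyMeasurable Y (P.map g) := (hY.mono hm').aestronglyMeasurable
  have hYg : Integrable (Y ∘ g) P := integrable_condExp.congr hYX.symm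
  refine ae_eq_condExp_of_forall_setIntegral_eq hm'
    ((integrable_map_measure hX.aestronglyMeasurable hg).mpr hXg)
    (fun _ _ _ => ((integrable_map_measure hYm hg).mpr hYg).integrableOn) (fun A hA _ => ?_)
    hY.aestronglyMeasurable
  obtain ⟨A', hA', hgA⟩ := hgm hA
  calc ∫ b in A, Y b ∂P.map g
      = ∫ a in A', Y (g a) ∂P := by
        rw [setIntegral_map (hm' A hA) hYm hg, setIntegral_congr_set hgA]
    _ = ∫ a in A', (P[X ∘ g | m]) a ∂P := integral_congr_ae (ae_restrict_of_ae hYX)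
    _ = ∫ a in A', X (g a) ∂P := setIntegral_condExp hm hXg hA'
    _ = ∫ b in A, X b ∂P.map g := by
        rw [setIntegral_map (hm' A hA) hX.aestronglyMeasurable hg, setIntegral_congr_set hgA]

end AeClosure

section GraphMap

variable {α β γ : Type*} [MeasurableSpace α] [MeasurableSpace β] [MeasurableSpace γ]

lemma intE_map {μ : Measure α} {g : α → β} (hg : AEMeasurable g μ) {f : β → ℝ}
    (hf : Measurable f) : intE (μ.map g) f = intE μ (f ∘ g) := by
  rw [intE, intE, lintegral_map' hf.ennreal_ofReal.aemeasurable hg,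
    lintegral_map' (f := fun b => ENNReal.ofReal (-f b)) hf.neg.ennreal_ofReal.aemeasurable hg]
  rfl

lemma prod_map_graph_apply_snd_preimage (ν : Measure γ) [SFinite ν] (P : Measure α) [SFinite P]
    {τ : α → β} (hτ : AEMeasurable τ P) {E : Set (γ × α)} (hE : MeasurableSet E) :
    (ν.prod (P.map fun a => (τ a, a))) {q | (q.1, q.2.2) ∈ E} = (ν.prod P) E := by
  have hsnd : (P.map fun a => (τ a, a)).snd = P := by
    rw [Measure.snd_map_prodMk₀ hτ, Measure.map_id']
  change (ν.prod _) (Prod.map id Prod.snd ⁻¹' E) = _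
  rw [← Measure.map_apply (measurable_id.prodMap measurable_snd) hE,
    ← Measure.map_prod_map _ _ measurable_id measurable_snd, Measure.map_id, ← Measure.snd, hsnd]

end GraphMap

section PathSpace

variable {d : ℕ}

lemma pathF_mono {s t : unitInterval} (h : s ≤ t) : pathF d s ≤ pathF d t :=
  iSup₂_le fun r hr => le_iSup₂_of_le r (hr.trans h) le_rfl

lemma measurable_pathF_eval {r s : unitInterval} (h : r ≤ s) :
    Measurable[pathF d s] (fun ω : PathSpace d => ω.1 r) :=
  Measurable.of_comap_le (le_iSup₂_of_le r h le_rfl)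

lemma measurable_pathSpace_eval (t : unitInterval) : Measurable (fun ω : PathSpace d => ω.1 t) :=
  measurable_pathF_eval unitInterval.le_one'

lemma measurable_barF_eval {r s : unitInterval} (h : r ≤ s) :
    Measurable[barF d s] (fun p : OmegaBar d => p.2.1 r) :=
  Measurable.of_comap_le (le_sup_of_le_right (le_iSup₂_of_le r h le_rfl))

lemma barF_le (s : unitInterval) : barF d s ≤ (inferInstance : MeasurableSpace (OmegaBar d)) :=
  sup_le (measurable_fst.min measurable_const).comap_le
    (iSup₂_le fun r _ => ((measurable_pathSpace_eval r).comp measurable_snd).comap_le)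

lemma augF_le_aeClosure (P : Measure (PathSpace d)) {u s : unitInterval} (hu : u ≤ s) :
    augF d P u ≤ aeClosure P (pathF d s) :=
  sup_le ((pathF_mono hu).trans (le_aeClosure P _))
    (MeasurableSpace.generateFrom_le fun _ hN => measurableSet_aeClosure_of_measure_eq_zero hN)

lemma IsSqIntMart.integrable_eval {P : Measure (PathSpace d)} [IsFiniteMeasure P]
    (hP : IsSqIntMart d P) (t : unitInterval) : Integrable (fun ω : PathSpace d => ω.1 t) P :=
  ((memLp_two_iff_integrable_sq_norm (measurable_pathSpace_eval t).aestronglyMeasurable).mpr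
    (hP.1 t)).integrable one_le_two

namespace IsStopTime

variable {P : Measure (PathSpace d)} {τ : PathSpace d → unitInterval}

lemma measurable_min (hτ : IsStopTime d P τ) (s : unitInterval) :
    Measurable[aeClosure P (pathF d s)] (fun ω => min (τ ω) s) := by
  refine measurable_of_Iic fun u => ?_
  rcases le_or_gt s u with hsu | hus
  · have hall : (fun ω => min (τ ω) s) ⁻¹' Iic u = univ :=
      eq_univ_of_forall fun ω => min_le_of_right_le hsu
    exact hall ▸ MeasurableSet.univ
  · have hτu : (fun ω => min (τ ω) s) ⁻¹' Iic u = {ω | τ ω ≤ u} := by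
      ext ω
      simp [hus.not_ge]
    exact hτu ▸ augF_le_aeClosure P hus.le _ (hτ u)

lemma aemeasurable (hτ : IsStopTime d P τ) : AEMeasurable τ P := by
  have hτ1 : Measurable[aeClosure P (pathF d 1)] τ := by
    simpa only [min_eq_left unitInterval.le_one'] using hτ.measurable_min 1
  exact NullMeasurable.aemeasurable fun B hB =>
    nullMeasurableSet_of_measurableSet_aeClosure le_rfl (hτ1 hB)

lemma aemeasurable_graph (hτ : IsStopTime d P τ) : AEMeasurable (fun ω => (τ ω, ω)) P :=
  hτ.aemeasurable.prodMk aemeasurable_id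

lemma measurable_graph (hτ : IsStopTime d P τ) (s : unitInterval) :
    Measurable[aeClosure P (pathF d s), barF d s] (fun ω => (τ ω, ω)) := by
  rw [measurable_iff_comap_le, barF, MeasurableSpace.comap_sup, MeasurableSpace.comap_comp]
  refine sup_le (hτ.measurable_min s).comap_le ?_
  simp_rw [MeasurableSpace.comap_iSup, MeasurableSpace.comap_comp]
  exact iSup₂_le fun r hr =>
    ((measurable_pathF_eval hr).mono (le_aeClosure P _) le_rfl).comap_le

end IsStopTime

lemma IsSqIntMart.map_graph {P : Measure (PathSpace d)} [IsFiniteMeasure P]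
    (hP : IsSqIntMart d P) {τ : PathSpace d → unitInterval} (hτ : IsStopTime d P τ) :
    IsSqIntMartBar d (P.map fun ω => (τ ω, ω)) := by
  have hX : ∀ t : unitInterval, Measurable fun p : OmegaBar d => p.2.1 t :=
    fun t => (measurable_pathSpace_eval t).comp measurable_snd
  refine ⟨fun t => ?_, fun s t hst => ?_⟩
  · exact (integrable_map_measure ((hX t).norm.pow_const 2).aestronglyMeasurable
      hτ.aemeasurable_graph).mpr (hP.1 t)
  · exact ae_eq_condExp_map hτ.aemeasurable_graph (pathF_mono unitInterval.le_one') (barF_le s)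
      (hτ.measurable_graph s) (hX t).stronglyMeasurable
      (measurable_barF_eval le_rfl).stronglyMeasurable (hP.integrable_eval t) (hP.2 s t hst)

end PathSpace

theorem pushforward_graph_mem_QEBar_general (d : ℕ)
    (E₁ : Set (PathSpace d))
    (E₂ : Set (unitInterval × PathSpace d)) (hE₂ : MeasurableSet E₂)
    (P : Measure (PathSpace d)) (hP : P ∈ QE d E₁ E₂)
    (τ : PathSpace d → unitInterval) (hτ : IsStopTime d P τ) :
    P.map (fun ω => (τ ω, ω)) ∈ QEBar d E₁ E₂ ∧
    ∀ Z : unitInterval × PathSpace d → ℝ, Measurable Z → NonAnticipativeFun Z →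
      (∃ c : ℝ, ∀ p, c ≤ Z p) →
      intE (P.map (fun ω => (τ ω, ω))) Z = intE P (fun ω => Z (τ ω, ω)) := by
  obtain ⟨⟨hPprob, hPmart⟩, hPE₁, hPE₂⟩ := hP
  have hgraph := hτ.aemeasurable_graph
  have hμprob : IsProbabilityMeasure (P.map fun ω => (τ ω, ω)) :=
    Measure.isProbabilityMeasure_map hgraph
  have : SFinite lebI := inferInstanceAs (SFinite (volume : Measure unitInterval))
  refine ⟨⟨⟨hμprob, hPmart.map_graph hτ⟩, ?_, ?_⟩, fun Z hZ _ _ => intE_map hgraph hZ⟩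
  · have hpre : (fun ω => (τ ω, ω)) ⁻¹' (univ ×ˢ E₁) = E₁ := by
      rw [mk_preimage_prod, preimage_univ, univ_inter, preimage_id']
    refine le_antisymm prob_le_one ?_
    calc 1 = P ((fun ω => (τ ω, ω)) ⁻¹' (univ ×ˢ E₁)) := by rw [hpre, hPE₁]
      _ ≤ _ := Measure.le_map_apply hgraph _
  · rw [prod_map_graph_apply_snd_preimage lebI P hτ.aemeasurable hE₂, hPE₂]

/-- the pushforward `μ` of `P ∈ 𝒬^E` under `ω ↦ (τ(ω), ω)`, for an
`𝔽^P`-stopping time `τ`, belongs to `𝒬̄^E`, and for every measurable non-anticipative `Z`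
bounded from below, `∫_{Ω̄} Z dμ = E^P[Z(τ(ω),ω)]`. -/
theorem pushforward_graph_mem_QEBar (d : ℕ) (hd : 1 ≤ d)
    (E₁ : Set (PathSpace d)) (hE₁ : MeasurableSet[pathF d 1] E₁)
    (E₂ : Set (unitInterval × PathSpace d)) (hE₂ : MeasurableSet E₂)
    (hE₂na : NonAnticipativeSet E₂)
    (P : Measure (PathSpace d)) (hP : P ∈ QE d E₁ E₂)
    (τ : PathSpace d → unitInterval) (hτ : IsStopTime d P τ) :
    P.map (fun ω => (τ ω, ω)) ∈ QEBar d E₁ E₂ ∧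
    ∀ Z : unitInterval × PathSpace d → ℝ, Measurable Z → NonAnticipativeFun Z →
      (∃ c : ℝ, ∀ p, c ≤ Z p) →
      intE (P.map (fun ω => (τ ω, ω))) Z = intE P (fun ω => Z (τ ω, ω)) :=
  pushforward_graph_mem_QEBar_general d E₁ E₂ hE₂ P hP τ hτ

end
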